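/- arXiv:2003.03731 — 7 statements merged into one kernel-verified Lean document; each statement's English description precedes it below -/
import Mathlib

section
/- Let ℓ, n be positive integers, let A ∈ ℝ^{ℓ×n} have all rational entries, let c ∈ ℝ^ℓ, and let X ⊆ ℝⁿ be a nonempty compact convex set. Set f = Sig(c,A) and f* = inf_{x∈X} f(x). Let A' ∈ ℝ^{(ℓ+1)×n} be the matrix obtained from A by appending a zero row. Then for every real λ < f*, there exists p ∈ ℕ such that the function x ↦ (∑_{j=1}^{ℓ+1} exp(A'_j · x))^p · (f(x) − λ) is X-SAGE with exponents in E_{p+1}(A'). -/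
open scoped BigOperators

/-- The signomial `Sig(c, A)(x) = ∑ j, c j * exp(A j ⬝ x)`. -/
noncomputable def Sig {ℓ n : ℕ} (c : Fin ℓ → ℝ) (A : Fin ℓ → Fin n → ℝ) :
    (Fin n → ℝ) → ℝ :=
  fun x => ∑ j, c j * Real.exp (∑ i, A j i * x i)

/-- `g` is an `X`-AGE function with exponents in the finite set `E`:
it is a signomial supported on `E` with at most one negative coefficient,
and it is nonnegative on `X`. -/
def IsAGE {n : ℕ} (X : Set (Fin n → ℝ)) (E : Finset (Fin n → ℝ))
    (g : (Fin n → ℝ) → ℝ) : Prop :=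
  (∃ d : (Fin n → ℝ) → ℝ,
      (∀ x, g x = ∑ α ∈ E, d α * Real.exp (∑ i, α i * x i)) ∧
      ∃ α₀, ∀ α ∈ E, α ≠ α₀ → 0 ≤ d α) ∧
    ∀ x ∈ X, 0 ≤ g x

/-- `g` is `X`-SAGE with exponents in `E`: a finite sum of `X`-AGE functions
with exponents in `E`. -/
def IsSAGE {n : ℕ} (X : Set (Fin n → ℝ)) (E : Finset (Fin n → ℝ))
    (g : (Fin n → ℝ) → ℝ) : Prop :=
  ∃ (k : ℕ) (gs : Fin k → (Fin n → ℝ) → ℝ),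
    (∀ j, IsAGE X E (gs j)) ∧ ∀ x, g x = ∑ j, gs j x

/-- `E_q(A) = { ∑ j, m j • A j : m ∈ ℕ^ℓ, ∑ j, m j = q }` as a finite set.
(Each `m j ≤ q`, so indexing by `Fin (q+1)` captures all of them.) -/
noncomputable def expSet {ℓ n : ℕ} (A : Fin ℓ → Fin n → ℝ) (q : ℕ) :
    Finset (Fin n → ℝ) :=
  Finset.image (fun m : Fin ℓ → Fin (q + 1) => fun i => ∑ j, (m j : ℕ) * A j i)
    (Finset.univ.filter fun m : Fin ℓ → Fin (q + 1) => ∑ j, (m j : ℕ) = q)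

/-- `A` with a zero row appended at the end. -/
noncomputable def appendZeroRow {ℓ n : ℕ} (A : Fin ℓ → Fin n → ℝ) :
    Fin (ℓ + 1) → Fin n → ℝ :=
  Fin.snoc A (fun _ => 0)

/-!
Write `M = ∑ⱼ exp (A'ⱼ ⬝ x)` and `F = f - λ = Sig c' A'`; by compactness `F ≥ δ M` on `X` for
some `δ > 0`. The multinomial theorem gives
`(p + 1) M ^ p F = ∑_{|m| = p + 1} (c' ⬝ m) (p+1 choose m) exp ((∑ⱼ mⱼ A'ⱼ) ⬝ x)`,
a signomial with exponents in `E_{p+1}(A')`. A term with `c' ⬝ m < 0` is exponentially small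
compared with `M ^ (p + 1)`: tilting by `exp (-s c'ⱼ)` (a Chernoff bound) bounds it by
`(∑ⱼ exp (A'ⱼ ⬝ x - s c'ⱼ)) ^ (p + 1) ≤ (ρ M) ^ (p + 1)` with `ρ < 1`, whereas the numbers of terms
and of exponents grow only polynomially in `p`. So for large `p` every negative coefficient is
absorbed by a `1 / #E` share of the positive part, which is at least `M ^ p F ≥ δ M ^ (p + 1)`,
and this splits `M ^ p F` into AGE functions.
-/

open Finset Real

noncomputable def expMonomial {n : ℕ} (β x : Fin n → ℝ) : ℝ :=
  exp (∑ i, β i * x i)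

theorem continuous_expMonomial {n : ℕ} (β : Fin n → ℝ) : Continuous (expMonomial β) := by
  unfold expMonomial
  fun_prop

theorem continuous_sig {L n : ℕ} (c : Fin L → ℝ) (a : Fin L → Fin n → ℝ) :
    Continuous (Sig c a) := by
  unfold Sig
  fun_prop

section Exponents

variable {L n : ℕ}

noncomputable def expVec (a : Fin L → Fin n → ℝ) (m : Fin L → ℕ) : Fin n → ℝ :=
  fun i => ∑ j, (m j : ℝ) * a j i

theorem prod_expMonomial_pow (a : Fin L → Fin n → ℝ) (m : Fin L → ℕ) (x : Fin n → ℝ) :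
    ∏ j, expMonomial (a j) x ^ m j = expMonomial (expVec a m) x := by
  simp only [expMonomial, expVec, ← exp_nat_mul, ← exp_sum, mul_sum, sum_mul]
  rw [sum_comm]
  exact congrArg exp (sum_congr rfl fun i _ => sum_congr rfl fun j _ => by ring)

theorem le_of_mem_piAntidiag {ι : Type*} [Fintype ι] [DecidableEq ι] {q : ℕ} {m : ι → ℕ}
    (hm : m ∈ piAntidiag univ q) (j : ι) : m j ≤ q :=
  (mem_piAntidiag.mp hm).1 ▸ single_le_sum (fun i _ => Nat.zero_le (m i)) (mem_univ j)

theorem expVec_mem_expSet (a : Fin L → Fin n → ℝ) {q : ℕ} {m : Fin L → ℕ}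
    (hm : m ∈ piAntidiag univ q) : expVec a m ∈ expSet a q := by
  refine mem_image.mpr ⟨fun j => ⟨m j, Nat.lt_succ_of_le (le_of_mem_piAntidiag hm j)⟩,
    mem_filter.mpr ⟨mem_univ _, (mem_piAntidiag.mp hm).1⟩, rfl⟩

theorem card_expSet_le (a : Fin L → Fin n → ℝ) (q : ℕ) : #(expSet a q) ≤ (q + 1) ^ L :=
  card_image_le.trans ((card_filter_le _ _).trans (by simp))

theorem card_piAntidiag_le (q : ℕ) : #(piAntidiag univ q : Finset (Fin L → ℕ)) ≤ (q + 1) ^ L := by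
  calc #(piAntidiag univ q) ≤ #(Fintype.piFinset fun _ : Fin L => range (q + 1)) :=
        card_le_card fun m hm => Fintype.mem_piFinset.mpr fun j =>
          mem_range.mpr (Nat.lt_succ_of_le (le_of_mem_piAntidiag hm j))
    _ = (q + 1) ^ L := by simp

end Exponents

section Multinomial

variable {ι : Type*} [Fintype ι] [DecidableEq ι]

theorem sum_mul_exp_pow (g c : ι → ℝ) (t : ℝ) (q : ℕ) :
    (∑ j, g j * exp (t * c j)) ^ q =
      ∑ m ∈ piAntidiag univ q,
        (Nat.multinomial univ m : ℝ) * (∏ j, g j ^ m j) * exp (t * ∑ j, c j * m j) := by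
  rw [sum_pow_eq_sum_piAntidiag]
  refine sum_congr rfl fun m _ => ?_
  simp_rw [mul_pow, prod_mul_distrib, ← exp_nat_mul, ← exp_sum, mul_sum]
  rw [mul_assoc]
  congr 3
  exact sum_congr rfl fun j _ => by ring

theorem sum_piAntidiag_mul_multinomial (g c : ι → ℝ) (q : ℕ) :
    ∑ m ∈ piAntidiag univ (q + 1),
        (∑ j, c j * m j) * Nat.multinomial univ m * ∏ j, g j ^ m j =
      (q + 1) * (∑ j, g j) ^ q * ∑ j, c j * g j := by
  -- differentiate the tilted expansion `sum_mul_exp_pow` at `t = 0`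
  have hlhs : HasDerivAt (fun t => (∑ j, g j * exp (t * c j)) ^ (q + 1))
      ((q + 1) * (∑ j, g j) ^ q * ∑ j, c j * g j) 0 :=
    ((HasDerivAt.fun_sum fun j (_ : j ∈ univ) =>
      ((hasDerivAt_mul_const (c j)).exp).const_mul (g j)).fun_pow (q + 1)).congr_deriv
      (by simp [mul_comm])
  have hrhs : HasDerivAt (fun t => ∑ m ∈ piAntidiag univ (q + 1),
        (Nat.multinomial univ m : ℝ) * (∏ j, g j ^ m j) * exp (t * ∑ j, c j * m j))
      (∑ m ∈ piAntidiag univ (q + 1),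
        (∑ j, c j * m j) * Nat.multinomial univ m * ∏ j, g j ^ m j) 0 :=
    HasDerivAt.fun_sum fun m _ =>
      (((hasDerivAt_mul_const _).exp).const_mul _).congr_deriv
        (by simp only [zero_mul, exp_zero]; ring)
  exact hrhs.unique (by simpa only [sum_mul_exp_pow] using hlhs)

theorem multinomial_mul_prod_pow_le {g : ι → ℝ} (hg : ∀ j, 0 ≤ g j) (c : ι → ℝ) {s : ℝ}
    (hs : 0 ≤ s) {q : ℕ} {m : ι → ℕ} (hm : m ∈ piAntidiag univ q)
    (hcm : ∑ j, c j * m j ≤ 0) :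
    Nat.multinomial univ m * ∏ j, g j ^ m j ≤ (∑ j, g j * exp (-s * c j)) ^ q := by
  have hterm : ∀ m' : ι → ℕ, 0 ≤ (Nat.multinomial univ m' : ℝ) * ∏ j, g j ^ m' j :=
    fun m' => mul_nonneg (Nat.cast_nonneg _) (prod_nonneg fun j _ => pow_nonneg (hg j) _)
  rw [sum_mul_exp_pow]
  calc _ ≤ (Nat.multinomial univ m : ℝ) * (∏ j, g j ^ m j) * exp (-s * ∑ j, c j * m j) :=
        le_mul_of_one_le_right (hterm m) (one_le_exp (by nlinarith))
    _ ≤ _ := single_le_sum (f := fun m' => (Nat.multinomial univ m' : ℝ) * (∏ j, g j ^ m' j) *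
          exp (-s * ∑ j, c j * m' j)) (fun m' _ => mul_nonneg (hterm m') (exp_pos _).le) hm

theorem neg_mul_multinomial_le {g : ι → ℝ} (hg : ∀ j, 0 ≤ g j) (c : ι → ℝ) {s : ℝ}
    (hs : 0 ≤ s) {q : ℕ} {m : ι → ℕ} (hm : m ∈ piAntidiag univ q) :
    -((∑ j, c j * m j) * Nat.multinomial univ m * ∏ j, g j ^ m j) ≤
      (∑ j, |c j|) * q * (∑ j, g j * exp (-s * c j)) ^ q := by
  have hK : 0 ≤ (Nat.multinomial univ m : ℝ) * ∏ j, g j ^ m j :=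
    mul_nonneg (Nat.cast_nonneg _) (prod_nonneg fun j _ => pow_nonneg (hg j) _)
  have hQ : 0 ≤ (∑ j, |c j|) * q * (∑ j, g j * exp (-s * c j)) ^ q := by
    have := sum_nonneg fun j (_ : j ∈ univ) => mul_nonneg (hg j) (exp_pos (-s * c j)).le
    positivity
  rcases le_or_gt 0 (∑ j, c j * m j) with hcm | hcm
  · nlinarith
  have hbound : -∑ j, c j * m j ≤ (∑ j, |c j|) * q :=
    calc -∑ j, c j * m j ≤ ∑ j, |c j| * m j := by
          rw [← sum_neg_distrib]
          exact sum_le_sum fun j _ => by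
            nlinarith [neg_abs_le (c j), (Nat.cast_nonneg (m j) : (0 : ℝ) ≤ m j)]
      _ ≤ ∑ j, |c j| * q := sum_le_sum fun j _ => mul_le_mul_of_nonneg_left
          (by exact_mod_cast le_of_mem_piAntidiag hm j) (abs_nonneg _)
      _ = (∑ j, |c j|) * q := (sum_mul ..).symm
  calc -((∑ j, c j * m j) * Nat.multinomial univ m * ∏ j, g j ^ m j)
      = -(∑ j, c j * m j) * (Nat.multinomial univ m * ∏ j, g j ^ m j) := by ring
    _ ≤ (∑ j, |c j|) * q * (Nat.multinomial univ m * ∏ j, g j ^ m j) :=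
        mul_le_mul_of_nonneg_right hbound hK
    _ ≤ _ := mul_le_mul_of_nonneg_left
        (multinomial_mul_prod_pow_le hg c hs hm hcm.le) (by positivity)

end Multinomial

section Contraction

variable {ι : Type*} [Fintype ι]

theorem exp_le_one_add_add_sq {u : ℝ} (hu : |u| ≤ 1) : exp u ≤ 1 + u + u ^ 2 := by
  linarith [(abs_le.mp (abs_exp_sub_one_sub_id_le hu)).2]

theorem exists_sum_mul_exp_neg_le (c : ι → ℝ) {δ : ℝ} (hδ : 0 < δ) :
    ∃ s ρ : ℝ, 0 ≤ s ∧ 0 < ρ ∧ ρ < 1 ∧ ∀ g : ι → ℝ, (∀ j, 0 ≤ g j) →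
      δ * ∑ j, g j ≤ ∑ j, c j * g j → ∑ j, g j * exp (-s * c j) ≤ ρ * ∑ j, g j := by
  set B := δ + ∑ j, |c j|
  have hδB : δ ≤ B := le_add_of_nonneg_right (sum_nonneg fun j _ => abs_nonneg _)
  have hB : 0 < B := hδ.trans_le hδB
  have hcB : ∀ j, |c j| ≤ B := fun j =>
    (single_le_sum (fun i _ => abs_nonneg (c i)) (mem_univ j)).trans (le_add_of_nonneg_left hδ.le)
  have hr₀ : 0 < δ ^ 2 / (4 * B ^ 2) := by positivity
  have hr₁ : δ ^ 2 / (4 * B ^ 2) ≤ 1 / 4 := by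
    rw [div_le_div_iff₀ (by positivity) (by positivity)]
    nlinarith
  -- with `exp u ≤ 1 + u + u ^ 2`, the choice `s = δ / (2 B²)` yields `ρ = 1 - s δ + s² B²`
  refine ⟨δ / (2 * B ^ 2), 1 - δ ^ 2 / (4 * B ^ 2), by positivity, by linarith, by linarith,
    fun g hg hgc => ?_⟩
  set s := δ / (2 * B ^ 2)
  have hsB : s * B ≤ 1 := by
    rw [div_mul_eq_mul_div, div_le_one (by positivity)]
    nlinarith
  have hexp : ∀ j, exp (-s * c j) ≤ 1 - s * c j + s ^ 2 * B ^ 2 := fun j => by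
    have hsc : |s * c j| ≤ s * B := by
      rw [abs_mul, abs_of_nonneg (by positivity : 0 ≤ s)]
      exact mul_le_mul_of_nonneg_left (hcB j) (by positivity)
    have hcj : c j ^ 2 ≤ B ^ 2 := sq_le_sq' (abs_le.mp (hcB j)).1 (abs_le.mp (hcB j)).2
    have := exp_le_one_add_add_sq (u := -s * c j) (by rw [neg_mul, abs_neg]; linarith)
    nlinarith [sq_nonneg s]
  calc ∑ j, g j * exp (-s * c j) ≤ ∑ j, g j * (1 - s * c j + s ^ 2 * B ^ 2) :=
        sum_le_sum fun j _ => mul_le_mul_of_nonneg_left (hexp j) (hg j)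
    _ = (1 + s ^ 2 * B ^ 2) * ∑ j, g j - s * ∑ j, c j * g j := by
        simp only [mul_sum, ← sum_sub_distrib]
        exact sum_congr rfl fun j _ => by ring
    _ ≤ (1 + s ^ 2 * B ^ 2) * ∑ j, g j - s * (δ * ∑ j, g j) := by gcongr
    _ = (1 - δ ^ 2 / (4 * B ^ 2)) * ∑ j, g j := by
        simp only [s]
        field_simp
        ring

end Contraction

theorem IsCompact.exists_pos_mul_le {α : Type*} [TopologicalSpace α] {X : Set α}
    (hX : IsCompact X) {F M : α → ℝ} (hF : ContinuousOn F X) (hM : ContinuousOn M X)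
    (hpos : ∀ x ∈ X, 0 < F x) (hM0 : ∀ x ∈ X, 0 ≤ M x) :
    ∃ δ > 0, ∀ x ∈ X, δ * M x ≤ F x := by
  rcases X.eq_empty_or_nonempty with rfl | hne
  · exact ⟨1, one_pos, by simp⟩
  obtain ⟨x₀, hx₀, hmin⟩ := hX.exists_isMinOn hne hF
  obtain ⟨K, hK⟩ := hX.bddAbove_image hM
  have hF₀ := hpos x₀ hx₀
  refine ⟨F x₀ / (|K| + 1), by positivity, fun x hx => ?_⟩
  have hMK : M x ≤ |K| + 1 := by linarith [hK ⟨x, hx, rfl⟩, le_abs_self K]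
  calc F x₀ / (|K| + 1) * M x ≤ F x₀ := by
        rw [div_mul_eq_mul_div, div_le_iff₀ (by positivity)]
        exact mul_le_mul_of_nonneg_left hMK hF₀.le
    _ ≤ F x := hmin hx

theorem exists_pow_mul_pow_le (K : ℕ) {ρ : ℝ} (hρ₀ : 0 < ρ) (hρ₁ : ρ < 1) {ε : ℝ}
    (hε : 0 < ε) : ∃ p : ℕ, ((p : ℝ) + 2) ^ K * ρ ^ (p + 1) ≤ ε := by
  have h := (tendsto_pow_const_mul_const_pow_of_abs_lt_one K
    (abs_lt.mpr ⟨by linarith, hρ₁⟩)).comp (Filter.tendsto_add_atTop_nat 2)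
  obtain ⟨p, hp⟩ := (h.eventually (gt_mem_nhds (mul_pos hε hρ₀))).exists
  have hp' : ((p : ℝ) + 2) ^ K * ρ ^ (p + 1) * ρ < ε * ρ := by
    simpa [pow_succ, mul_assoc] using hp
  exact ⟨p, (lt_of_mul_lt_mul_right hp' hρ₀.le).le⟩

section SAGE

variable {n : ℕ} {X : Set (Fin n → ℝ)} {E : Finset (Fin n → ℝ)}

theorem IsAGE.isSAGE {g : (Fin n → ℝ) → ℝ} (h : IsAGE X E g) : IsSAGE X E g :=
  ⟨1, fun _ => g, fun _ => h, fun x => by simp⟩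

theorem IsSAGE.zero : IsSAGE X E 0 :=
  ⟨0, fun _ => 0, fun j => j.elim0, fun _ => by simp⟩

theorem IsSAGE.add {f g : (Fin n → ℝ) → ℝ} (hf : IsSAGE X E f) (hg : IsSAGE X E g) :
    IsSAGE X E (f + g) := by
  obtain ⟨k, fs, hfs, hf⟩ := hf
  obtain ⟨l, gs, hgs, hg⟩ := hg
  refine ⟨k + l, Fin.append fs gs, fun j => ?_, fun x => ?_⟩
  · induction j using Fin.addCases with
    | left i => simpa using hfs i
    | right i => simpa using hgs i
  · simp [Fin.sum_univ_add, hf, hg]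

theorem IsSAGE.sum {ι : Type*} (s : Finset ι) {f : ι → (Fin n → ℝ) → ℝ}
    (h : ∀ i ∈ s, IsSAGE X E (f i)) : IsSAGE X E (∑ i ∈ s, f i) :=
  sum_induction f (IsSAGE X E) (fun _ _ => IsSAGE.add) IsSAGE.zero h

theorem isAGE_sum_of_nonneg {d : (Fin n → ℝ) → ℝ} (hd : ∀ α ∈ E, 0 ≤ d α) :
    IsAGE X E (fun x => ∑ α ∈ E, d α * expMonomial α x) :=
  ⟨⟨d, fun _ => rfl, 0, fun α hα _ => hd α hα⟩,
    fun _ _ => sum_nonneg fun α hα => mul_nonneg (hd α hα) (exp_pos _).le⟩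

theorem isSAGE_of_neg_coeff_le (d : (Fin n → ℝ) → ℝ) {t : ℝ} (ht : 0 ≤ t)
    (hcard : #E * t ≤ 1)
    (hneg : ∀ β ∈ E, d β < 0 → ∀ x ∈ X,
      -(d β * expMonomial β x) ≤ t * ∑ α ∈ E, max (d α) 0 * expMonomial α x) :
    IsSAGE X E (fun x => ∑ β ∈ E, d β * expMonomial β x) := by
  set P := fun x => ∑ α ∈ E, max (d α) 0 * expMonomial α x with hPdef
  have hP : ∀ x, 0 ≤ P x := fun x =>
    sum_nonneg fun α _ => mul_nonneg (le_max_right _ _) (exp_pos _).le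
  -- `∑ d β e^β = ∑ β ∈ E, (t P + min (d β) 0 e^β) + (1 - #E t) P` with `P` the positive part,
  -- and each summand has at most one negative coefficient
  have hpiece : ∀ β ∈ E,
      IsSAGE X E (fun x => t * P x + min (d β) 0 * expMonomial β x) := by
    intro β hβ
    refine IsAGE.isSAGE ⟨⟨fun α => t * max (d α) 0 + if α = β then min (d β) 0 else 0,
      fun x => ?_, β, fun α _ hαβ => ?_⟩, fun x hx => ?_⟩
    · simp only [add_mul, sum_add_distrib, ite_mul, zero_mul, sum_ite_eq', if_pos hβ, hPdef,
        mul_sum, mul_assoc]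
      rfl
    · simpa [hαβ] using mul_nonneg ht (le_max_right (d α) 0)
    · show 0 ≤ t * P x + min (d β) 0 * expMonomial β x
      rcases lt_or_ge (d β) 0 with h | h
      · rw [min_eq_left h.le]
        linarith [hneg β hβ h x hx]
      · rw [min_eq_right h, zero_mul, add_zero]
        exact mul_nonneg ht (hP x)
  have hrest : IsSAGE X E (fun x => (1 - #E * t) * P x) := by
    convert (isAGE_sum_of_nonneg (X := X) (E := E) (d := fun α => (1 - #E * t) * max (d α) 0)
      fun α _ => mul_nonneg (by linarith) (le_max_right _ _)).isSAGE using 2 with x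
    simp only [hPdef, mul_sum, mul_assoc]
  convert (IsSAGE.sum E hpiece).add hrest using 1
  funext x
  simp only [Pi.add_apply, Finset.sum_apply, sum_add_distrib, sum_const, nsmul_eq_mul, hPdef]
  have hsplit : ∑ β ∈ E, d β * expMonomial β x = ∑ α ∈ E, max (d α) 0 * expMonomial α x +
      ∑ β ∈ E, min (d β) 0 * expMonomial β x := by
    rw [← sum_add_distrib]
    exact sum_congr rfl fun β _ => by rw [← add_mul, max_add_min, add_zero]
  rw [hsplit]
  ring

theorem isSAGE_of_neg_terms_le {ι : Type*} (s : Finset ι) {φ : ι → Fin n → ℝ}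
    (hφ : ∀ i ∈ s, φ i ∈ E) (coef : ι → ℝ) {f b : (Fin n → ℝ) → ℝ}
    (hf : ∀ x, f x = ∑ i ∈ s, coef i * expMonomial (φ i) x)
    (hb0 : ∀ x ∈ X, 0 ≤ b x)
    (hterm : ∀ i ∈ s, ∀ x ∈ X, -(coef i * expMonomial (φ i) x) ≤ b x)
    (hb : ∀ x ∈ X, #E * #s * b x ≤ f x) :
    IsSAGE X E f := by
  classical
  set d := fun β => ∑ i ∈ s with φ i = β, coef i
  have hfd : ∀ x, f x = ∑ β ∈ E, d β * expMonomial β x := fun x => by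
    rw [hf, ← sum_fiberwise_of_maps_to hφ]
    refine sum_congr rfl fun β _ => ?_
    rw [sum_mul]
    exact sum_congr rfl fun i hi => by rw [(mem_filter.mp hi).2]
  have hfP : ∀ x, f x ≤ ∑ α ∈ E, max (d α) 0 * expMonomial α x := fun x => by
    rw [hfd]
    exact sum_le_sum fun α _ => mul_le_mul_of_nonneg_right (le_max_left _ _) (exp_pos _).le
  rw [show f = fun x => ∑ β ∈ E, d β * expMonomial β x from funext hfd]
  refine isSAGE_of_neg_coeff_le d (t := (#E : ℝ)⁻¹) (by positivity) ?_ fun β hβ _ x hx => ?_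
  · rcases (Nat.cast_nonneg (α := ℝ) #E).eq_or_lt with hE | hE
    · simp [← hE]
    · rw [mul_inv_cancel₀ hE.ne']
  have hE : (0 : ℝ) < #E := Nat.cast_pos.mpr (card_pos.mpr ⟨β, hβ⟩)
  calc -(d β * expMonomial β x) = ∑ i ∈ s with φ i = β, -(coef i * expMonomial (φ i) x) := by
        rw [sum_mul, ← sum_neg_distrib]
        exact sum_congr rfl fun i hi => by rw [(mem_filter.mp hi).2]
    _ ≤ ∑ i ∈ s with φ i = β, b x := sum_le_sum fun i hi => hterm i (mem_filter.mp hi).1 x hx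
    _ = #{i ∈ s | φ i = β} * b x := by rw [sum_const, nsmul_eq_mul]
    _ ≤ #s * b x := mul_le_mul_of_nonneg_right (by exact_mod_cast card_filter_le _ _) (hb0 x hx)
    _ ≤ (#E : ℝ)⁻¹ * f x := by
        rw [le_inv_mul_iff₀ hE, ← mul_assoc]
        exact hb x hx
    _ ≤ _ := mul_le_mul_of_nonneg_left (hfP x) (by positivity)

end SAGE

section ModulatedSignomial

variable {L n : ℕ} (a : Fin L → Fin n → ℝ) (c : Fin L → ℝ) (x : Fin n → ℝ)

theorem sum_expMonomial_pow_mul_eq (p : ℕ) :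
    (∑ j, expMonomial (a j) x) ^ p * ∑ j, c j * expMonomial (a j) x =
      ∑ m ∈ piAntidiag univ (p + 1),
        (∑ j, c j * m j) * Nat.multinomial univ m / (p + 1) * expMonomial (expVec a m) x := by
  simp_rw [div_mul_eq_mul_div, ← sum_div, ← prod_expMonomial_pow,
    sum_piAntidiag_mul_multinomial]
  field_simp

theorem neg_coeff_mul_expMonomial_le {s : ℝ} (hs : 0 ≤ s) {p : ℕ} {m : Fin L → ℕ}
    (hm : m ∈ piAntidiag univ (p + 1)) :
    -((∑ j, c j * m j) * Nat.multinomial univ m / (p + 1) * expMonomial (expVec a m) x) ≤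
      (∑ j, |c j|) * (∑ j, expMonomial (a j) x * exp (-s * c j)) ^ (p + 1) := by
  have hg : ∀ j, 0 ≤ expMonomial (a j) x := fun j => (exp_pos _).le
  calc -((∑ j, c j * m j) * Nat.multinomial univ m / (p + 1) * expMonomial (expVec a m) x)
      = -((∑ j, c j * m j) * Nat.multinomial univ m * ∏ j, expMonomial (a j) x ^ m j) /
          (p + 1) := by
        rw [← prod_expMonomial_pow]
        ring
    _ ≤ (∑ j, |c j|) * (p + 1 : ℕ) * (∑ j, expMonomial (a j) x * exp (-s * c j)) ^ (p + 1) /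
          (p + 1) :=
        div_le_div_of_nonneg_right (neg_mul_multinomial_le hg c hs hm) (by positivity)
    _ = _ := by
        push_cast
        field_simp

theorem exists_isSAGE_sum_exp_pow_mul_sig {X : Set (Fin n → ℝ)} (hX : IsCompact X)
    (hpos : ∀ x ∈ X, 0 < Sig c a x) :
    ∃ p : ℕ, IsSAGE X (expSet a (p + 1))
      (fun x => (∑ j, exp (∑ i, a j i * x i)) ^ p * Sig c a x) := by
  have hM : ∀ x, 0 ≤ ∑ j, expMonomial (a j) x := fun x => sum_nonneg fun j _ => (exp_pos _).le
  set B := ∑ j, |c j|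
  have hB : 0 ≤ B := sum_nonneg fun j _ => abs_nonneg _
  obtain ⟨δ, hδ, hδM⟩ : ∃ δ > 0, ∀ x ∈ X,
      δ * ∑ j, expMonomial (a j) x ≤ ∑ j, c j * expMonomial (a j) x :=
    hX.exists_pos_mul_le (continuous_sig c a).continuousOn
      (continuous_finsetSum _ fun j _ => continuous_expMonomial (a j)).continuousOn hpos
      fun x _ => hM x
  obtain ⟨s, ρ, hs, hρ₀, hρ₁, hcontr⟩ := exists_sum_mul_exp_neg_le c hδ
  obtain ⟨p, hp⟩ := exists_pow_mul_pow_le (2 * L) hρ₀ hρ₁ (div_pos hδ (by linarith : 0 < B + 1))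
  refine ⟨p, isSAGE_of_neg_terms_le (piAntidiag univ (p + 1))
    (fun m hm => expVec_mem_expSet a hm)
    (fun m => (∑ j, c j * m j) * Nat.multinomial univ m / (p + 1))
    (b := fun x => B * (ρ * ∑ j, expMonomial (a j) x) ^ (p + 1))
    (sum_expMonomial_pow_mul_eq a c · p) (fun x _ => by have := hM x; positivity)
    (fun m hm x hx => ?_) (fun x hx => ?_)⟩
  · have hQ₀ : 0 ≤ ∑ j, expMonomial (a j) x * exp (-s * c j) :=
      sum_nonneg fun j _ => mul_nonneg (exp_pos _).le (exp_pos _).le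
    refine (neg_coeff_mul_expMonomial_le a c x hs hm).trans ?_
    gcongr
    exact hcontr _ (fun j => (exp_pos _).le) (hδM x hx)
  · have hE : (#(expSet a (p + 1)) : ℝ) ≤ (p + 2) ^ L := by
      exact_mod_cast card_expSet_le a (p + 1)
    have hT : (#(piAntidiag univ (p + 1) : Finset (Fin L → ℕ)) : ℝ) ≤ (p + 2) ^ L := by
      exact_mod_cast card_piAntidiag_le (p + 1)
    have hBδ : B * (δ / (B + 1)) ≤ δ := by
      rw [mul_div_assoc', div_le_iff₀ (by linarith)]
      nlinarith
    set M := ∑ j, expMonomial (a j) x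
    have := hM x
    calc _ ≤ (p + 2) ^ L * (p + 2) ^ L * (B * (ρ * M) ^ (p + 1)) := by gcongr
      _ = B * ((p + 2) ^ (2 * L) * ρ ^ (p + 1)) * M ^ (p + 1) := by ring
      _ ≤ B * (δ / (B + 1)) * M ^ (p + 1) := by gcongr
      _ ≤ δ * M ^ (p + 1) := by gcongr
      _ = M ^ p * (δ * M) := by ring
      _ ≤ M ^ p * ∑ j, c j * expMonomial (a j) x := by gcongr; exact hδM x hx

end ModulatedSignomial

theorem sig_snoc_appendZeroRow {ℓ n : ℕ} (c : Fin ℓ → ℝ) (A : Fin ℓ → Fin n → ℝ) (lam : ℝ)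
    (x : Fin n → ℝ) : Sig (Fin.snoc c (-lam)) (appendZeroRow A) x = Sig c A x - lam := by
  simp [Sig, appendZeroRow, Fin.sum_univ_castSucc, sub_eq_add_neg]

theorem stmt1_general {ℓ n : ℕ}
    (A : Fin ℓ → Fin n → ℝ)
    (c : Fin ℓ → ℝ) (X : Set (Fin n → ℝ))
    (hXcompact : IsCompact X)
    (lam : ℝ) (hlam : lam < sInf (Sig c A '' X)) :
    ∃ p : ℕ,
      IsSAGE X (expSet (appendZeroRow A) (p + 1))
        (fun x =>
          (∑ j : Fin (ℓ + 1),
              Real.exp (∑ i, appendZeroRow A j i * x i)) ^ p *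
            (Sig c A x - lam)) := by
  have hpos : ∀ x ∈ X, 0 < Sig (Fin.snoc c (-lam)) (appendZeroRow A) x := fun x hx => by
    rw [sig_snoc_appendZeroRow, sub_pos]
    exact hlam.trans_le (csInf_le (hXcompact.image (continuous_sig c A)).bddBelow ⟨x, hx, rfl⟩)
  simpa only [sig_snoc_appendZeroRow] using
    exists_isSAGE_sum_exp_pow_mul_sig (appendZeroRow A) _ hXcompact hpos

/-- Convergent hierarchy of SAGE lower bounds: for every `λ < f* = inf_X f`,
some modulated power of `f - λ` (with a zero row appended to the exponents)
is `X`-SAGE. -/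
theorem stmt1 {ℓ n : ℕ} (hℓ : 0 < ℓ) (hn : 0 < n)
    (A : Fin ℓ → Fin n → ℝ) (hA : ∀ j i, ∃ q : ℚ, A j i = (q : ℝ))
    (c : Fin ℓ → ℝ) (X : Set (Fin n → ℝ)) (hXne : X.Nonempty)
    (hXcompact : IsCompact X) (hXconvex : Convex ℝ X)
    (lam : ℝ) (hlam : lam < sInf (Sig c A '' X)) :
    ∃ p : ℕ,
      IsSAGE X (expSet (appendZeroRow A) (p + 1))
        (fun x =>
          (∑ j : Fin (ℓ + 1),
              Real.exp (∑ i, appendZeroRow A j i * x i)) ^ p *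
            (Sig c A x - lam)) :=
  stmt1_general A c X hXcompact lam hlam
end

section
/- Let X ⊆ ℝⁿ be a nonempty compact convex set, let A ∈ ℝ^{ℓ×n} with rows A_1,…,A_ℓ, let i ∈ {1,…,ℓ}, and let c ∈ ℝ^ℓ satisfy c_j ≥ 0 for all j ≠ i. Then Sig(c,A)(x) ≥ 0 for all x ∈ X if and only if there exist a vector v = (v_j)_{j≠i} with v_j ≥ 0 for all j ≠ i, with v_j = 0 whenever c_j = 0, and a vector λ ∈ ℝⁿ such that σ_X(λ) + ∑_{j≠i} v_j · log(v_j / c_j) − ∑_{j≠i} v_j ≤ c_i and ∑_{j≠i} v_j · (A_j − A_i) + λ = 0, where a summand v_j · log(v_j / c_j) is interpreted as 0 when v_j = 0. -/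
open scoped BigOperators

/-- The support function `σ_X(λ) = sup_{x ∈ X} λ ⬝ x` of a set `X ⊆ ℝⁿ`. -/
noncomputable def suppFn {n : ℕ} (X : Set (Fin n → ℝ)) (lam : Fin n → ℝ) : ℝ :=
  sSup ((fun x => ∑ k, lam k * x k) '' X)

/-!
Dividing by `exp (A i ⬝ᵥ x)`, nonnegativity of `Sig c A` on `X` says `c i + f ≥ 0` on `X`, where
`f x = ∑_{j ≠ i} c j * exp ((A j - A i) ⬝ᵥ x)`. Given a certificate, the Fenchel–Young inequality
`v t - v log (v / c) + v ≤ c exp t` for the relative entropy, summed over `j ≠ i`, together with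
`λ ⬝ᵥ x ≤ σ_X(λ)`, bounds `f` below by `-c i`. Conversely, at a minimiser `x*` of `f` on `X` take
for `v j` the terms of `f x*` and `λ = -∇f(x*)`: first-order optimality on the convex set `X` gives
`σ_X(λ) = λ ⬝ᵥ x*`, and Fenchel–Young holds with equality, so the certificate inequality becomes
`c i + f x* ≥ 0`.
-/

open Finset Matrix Real

lemma mul_sub_mul_log_div_add_le_mul_exp {c v : ℝ} (t : ℝ) (hc : 0 ≤ c) (hv : 0 ≤ v)
    (hcv : c = 0 → v = 0) : v * t - v * log (v / c) + v ≤ c * exp t := by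
  rcases hv.eq_or_lt with rfl | hv
  · simpa using mul_nonneg hc (exp_pos t).le
  have hc : 0 < c := hc.lt_of_ne fun h => hv.ne' (hcv h.symm)
  have hvc : v * exp (t - log (v / c)) = c * exp t := by
    rw [exp_sub, exp_log (div_pos hv hc)]
    field_simp
  calc v * t - v * log (v / c) + v = v * (t - log (v / c) + 1) := by ring
    _ ≤ v * exp (t - log (v / c)) := by gcongr; exact add_one_le_exp _
    _ = c * exp t := hvc

lemma mul_log_div_eq_of_eq_mul_exp {c v t : ℝ} (h : v = c * exp t) :
    v * log (v / c) = v * t := by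
  rcases eq_or_ne c 0 with rfl | hc
  · simp [h]
  · rw [h, mul_div_cancel_left₀ _ hc, log_exp]

lemma hasFDerivAt_sum_mul_exp_dotProduct {ι m : Type*} [Fintype m] (s : Finset ι) (c : ι → ℝ)
    (a : ι → m → ℝ) (x : m → ℝ) :
    HasFDerivAt (fun y => ∑ j ∈ s, c j * exp (a j ⬝ᵥ y))
      (dotProductBilin ℝ ℝ (∑ j ∈ s, (c j * exp (a j ⬝ᵥ x)) • a j)).toContinuousLinearMap x := by
  have hlin (u : m → ℝ) :
      HasFDerivAt (fun y => u ⬝ᵥ y) (dotProductBilin ℝ ℝ u).toContinuousLinearMap x :=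
    (dotProductBilin ℝ ℝ u).toContinuousLinearMap.hasFDerivAt
  refine (HasFDerivAt.fun_sum fun j _ => ((hlin (a j)).exp).const_mul (c j)).congr_fderiv ?_
  ext y
  simp [mul_assoc]

section suppFn

variable {n : ℕ} {X : Set (Fin n → ℝ)}

lemma dotProduct_le_suppFn (hX : IsCompact X) (lam : Fin n → ℝ) {x : Fin n → ℝ} (hx : x ∈ X) :
    lam ⬝ᵥ x ≤ suppFn X lam :=
  le_csSup ((hX.image (by fun_prop)).bddAbove) ⟨x, hx, rfl⟩

lemma suppFn_le (hX : X.Nonempty) {lam : Fin n → ℝ} {b : ℝ} (h : ∀ x ∈ X, lam ⬝ᵥ x ≤ b) :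
    suppFn X lam ≤ b :=
  csSup_le (hX.image _) (by rintro _ ⟨x, hx, rfl⟩; exact h x hx)

end suppFn

section Sig

variable {ℓ n : ℕ} (c : Fin ℓ → ℝ) (A : Fin ℓ → Fin n → ℝ) (i : Fin ℓ)

noncomputable def restSig (x : Fin n → ℝ) : ℝ :=
  ∑ j ∈ univ.erase i, c j * exp ((A j - A i) ⬝ᵥ x)

lemma Sig_eq_exp_mul (x : Fin n → ℝ) :
    Sig c A x = exp (A i ⬝ᵥ x) * (c i + restSig c A i x) := by
  change ∑ j, c j * exp (A j ⬝ᵥ x) = _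
  rw [← add_sum_erase _ _ (mem_univ i), restSig, mul_add, mul_sum, mul_comm (c i)]
  congr 1
  refine sum_congr rfl fun j _ => ?_
  rw [sub_dotProduct, exp_sub]
  field_simp

lemma Sig_nonneg_iff (x : Fin n → ℝ) : 0 ≤ Sig c A x ↔ 0 ≤ c i + restSig c A i x := by
  rw [Sig_eq_exp_mul c A i]
  exact mul_nonneg_iff_of_pos_left (exp_pos _)

variable {X : Set (Fin n → ℝ)}

theorem Sig_nonneg_of_certificate (hX : IsCompact X) (hc : ∀ j, j ≠ i → 0 ≤ c j)
    {v : Fin ℓ → ℝ} (hv : ∀ j, j ≠ i → 0 ≤ v j) (hcv : ∀ j, j ≠ i → c j = 0 → v j = 0)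
    (hbound : suppFn X (-∑ j ∈ univ.erase i, v j • (A j - A i))
      + ∑ j ∈ univ.erase i, v j * log (v j / c j) - ∑ j ∈ univ.erase i, v j ≤ c i)
    {x : Fin n → ℝ} (hx : x ∈ X) : 0 ≤ Sig c A x := by
  rw [Sig_nonneg_iff c A i]
  have hsupp := dotProduct_le_suppFn hX (-∑ j ∈ univ.erase i, v j • (A j - A i)) hx
  have hterm : ∀ j ∈ univ.erase i,
      v j * ((A j - A i) ⬝ᵥ x) - v j * log (v j / c j) + v j ≤ c j * exp ((A j - A i) ⬝ᵥ x) :=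
    fun j hj => have hj := ne_of_mem_erase hj
      mul_sub_mul_log_div_add_le_mul_exp _ (hc j hj) (hv j hj) (hcv j hj)
  have hsum := sum_le_sum hterm
  rw [sum_add_distrib, sum_sub_distrib] at hsum
  simp only [neg_dotProduct, sum_dotProduct, smul_dotProduct, smul_eq_mul] at hsupp
  rw [restSig]
  linarith

theorem exists_certificate_of_Sig_nonneg (hXne : X.Nonempty) (hX : IsCompact X)
    (hXconvex : Convex ℝ X) (hc : ∀ j, j ≠ i → 0 ≤ c j) (hpos : ∀ x ∈ X, 0 ≤ Sig c A x) :
    ∃ v : Fin ℓ → ℝ, (∀ j, j ≠ i → 0 ≤ v j) ∧ (∀ j, j ≠ i → c j = 0 → v j = 0) ∧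
      suppFn X (-∑ j ∈ univ.erase i, v j • (A j - A i))
        + ∑ j ∈ univ.erase i, v j * log (v j / c j) - ∑ j ∈ univ.erase i, v j ≤ c i := by
  have hderiv := hasFDerivAt_sum_mul_exp_dotProduct (univ.erase i) c (fun j => A j - A i)
  obtain ⟨xs, hxs, hmin⟩ := hX.exists_isMinOn hXne
    (continuous_iff_continuousAt.2 fun x => (hderiv x).continuousAt).continuousOn
  set v : Fin ℓ → ℝ := fun j => c j * exp ((A j - A i) ⬝ᵥ xs)
  set g := ∑ j ∈ univ.erase i, v j • (A j - A i)
  refine ⟨v, fun j hj => mul_nonneg (hc j hj) (exp_pos _).le, fun j _ hcj => by simp [v, hcj], ?_⟩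
  have hsupp : suppFn X (-g) ≤ -g ⬝ᵥ xs := by
    refine suppFn_le hXne fun x hx => ?_
    have hfirst := hmin.localize.hasFDerivWithinAt_nonneg (hderiv xs).hasFDerivWithinAt
      (sub_mem_posTangentConeAt_of_segment_subset (hXconvex.segment_subset hxs hx))
    simp only [LinearMap.coe_toContinuousLinearMap', dotProductBilin_apply_apply,
      dotProduct_sub] at hfirst
    simp only [neg_dotProduct]
    linarith
  have hlog : ∑ j ∈ univ.erase i, v j * log (v j / c j) = g ⬝ᵥ xs := by
    simp only [g, sum_dotProduct, smul_dotProduct, smul_eq_mul]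
    exact sum_congr rfl fun j _ => mul_log_div_eq_of_eq_mul_exp rfl
  have hmin_nonneg := (Sig_nonneg_iff c A i xs).1 (hpos xs hxs)
  rw [hlog]
  simp only [neg_dotProduct, restSig] at hsupp hmin_nonneg
  linarith

end Sig

/-- Relative-entropy characterization of the conditional AGE cone
(Theorem 1 / Murray–Chandrasekaran–Wierman).  The summand
`v j * log (v j / c j)` is literally `0` when `v j = 0`. -/
theorem stmt2 {ℓ n : ℕ} (X : Set (Fin n → ℝ)) (hXne : X.Nonempty)
    (hXcompact : IsCompact X) (hXconvex : Convex ℝ X)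
    (A : Fin ℓ → Fin n → ℝ) (i : Fin ℓ) (c : Fin ℓ → ℝ)
    (hc : ∀ j, j ≠ i → 0 ≤ c j) :
    (∀ x ∈ X, 0 ≤ Sig c A x) ↔
      ∃ (v : Fin ℓ → ℝ) (lam : Fin n → ℝ),
        (∀ j, j ≠ i → 0 ≤ v j) ∧
        (∀ j, j ≠ i → c j = 0 → v j = 0) ∧
        suppFn X lam
            + ∑ j ∈ Finset.univ.erase i, v j * Real.log (v j / c j)
            - ∑ j ∈ Finset.univ.erase i, v j ≤ c i ∧
        ∀ k, (∑ j ∈ Finset.univ.erase i, v j * (A j k - A i k)) + lam k = 0 := by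
  have hlin (v : Fin ℓ → ℝ) (lam : Fin n → ℝ) :
      (∀ k, (∑ j ∈ univ.erase i, v j * (A j k - A i k)) + lam k = 0) ↔
        lam = -∑ j ∈ univ.erase i, v j • (A j - A i) := by
    rw [eq_neg_iff_add_eq_zero, add_comm, funext_iff]
    simp only [Pi.add_apply, Finset.sum_apply, Pi.smul_apply, Pi.sub_apply, smul_eq_mul,
      Pi.zero_apply]
  constructor
  · intro hpos
    obtain ⟨v, hv, hcv, hbound⟩ :=
      exists_certificate_of_Sig_nonneg c A i hXne hXcompact hXconvex hc hpos
    exact ⟨v, _, hv, hcv, hbound, (hlin v _).2 rfl⟩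
  · rintro ⟨v, lam, hv, hcv, hbound, hk⟩
    rw [(hlin v lam).1 hk] at hbound
    exact fun x hx => Sig_nonneg_of_certificate c A i hXcompact hc hv hcv hbound hx
end

section
/- For every compact convex set X ⊆ ℝⁿ there exists a set H of pairs (w, b) with w ∈ ℚⁿ and b ∈ ℚ such that X = { x ∈ ℝⁿ : for every (w, b) ∈ H, ∑_{i=1}^n w_i x_i ≤ b }, where the rational entries are viewed as real numbers. -/
/-! A point `x ∉ X` is strictly separated from the closed convex set `X` by a real pair `(w, b)`
(Hahn–Banach). Because `X` is compact, the pairs that strictly separate `X` from `x` form an open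
set of `ℝⁿ × ℝ`, so this set contains a rational pair, and the rational halfspaces containing `X`
cut out exactly `X`. -/

open Matrix

lemma denseRange_ratCast_pi_prod {ι : Type*} :
    DenseRange (Prod.map (fun w : ι → ℚ => fun i => (w i : ℝ)) ((↑) : ℚ → ℝ)) :=
  (DenseRange.piMap fun _ => Rat.denseRange_cast).prodMap Rat.denseRange_cast

variable {ι : Type*} [Fintype ι]

lemma LinearMap.exists_eq_dotProduct (f : (ι → ℝ) →ₗ[ℝ] ℝ) : ∃ w : ι → ℝ, ∀ y, f y = w ⬝ᵥ y := by
  classical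
  exact ⟨fun i => f fun j => if i = j then 1 else 0, fun y => by
    simp only [LinearMap.pi_apply_eq_sum_univ f y, dotProduct, smul_eq_mul, mul_comm]⟩

lemma exists_dotProduct_lt_lt_of_notMem {X : Set (ι → ℝ)} (hconv : Convex ℝ X)
    (hclosed : IsClosed X) {x : ι → ℝ} (hx : x ∉ X) :
    ∃ p : (ι → ℝ) × ℝ, (∀ y ∈ X, p.1 ⬝ᵥ y < p.2) ∧ p.2 < p.1 ⬝ᵥ x := by
  obtain ⟨f, u, hXu, hux⟩ := geometric_hahn_banach_closed_point hconv hclosed hx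
  obtain ⟨w, hw⟩ := LinearMap.exists_eq_dotProduct (f : (ι → ℝ) →ₗ[ℝ] ℝ)
  exact ⟨(w, u), fun y hy => hw y ▸ hXu y hy, hw x ▸ hux⟩

lemma IsCompact.isOpen_setOf_forall_dotProduct_lt {X : Set (ι → ℝ)} (hX : IsCompact X) :
    IsOpen {p : (ι → ℝ) × ℝ | ∀ y ∈ X, p.1 ⬝ᵥ y < p.2} := by
  refine isOpen_iff_mem_nhds.2 fun p hp => hX.eventually_forall_of_forall_eventually fun y hy => ?_
  have hcont : Continuous fun q : ((ι → ℝ) × ℝ) × (ι → ℝ) => q.1.2 - q.1.1 ⬝ᵥ q.2 := by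
    fun_prop
  filter_upwards [hcont.isOpen_preimage _ isOpen_Ioi |>.mem_nhds (sub_pos.2 (hp y hy))]
    with q hq
  simpa using hq

lemma exists_rat_dotProduct_le_lt_of_notMem {X : Set (ι → ℝ)} (hcomp : IsCompact X)
    (hconv : Convex ℝ X) {x : ι → ℝ} (hx : x ∉ X) :
    ∃ (w : ι → ℚ) (b : ℚ),
      (∀ y ∈ X, ∑ i, (w i : ℝ) * y i ≤ b) ∧ (b : ℝ) < ∑ i, (w i : ℝ) * x i := by
  have hopen : IsOpen {p : (ι → ℝ) × ℝ | (∀ y ∈ X, p.1 ⬝ᵥ y < p.2) ∧ p.2 < p.1 ⬝ᵥ x} :=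
    hcomp.isOpen_setOf_forall_dotProduct_lt.inter (isOpen_lt continuous_snd (by fun_prop))
  obtain ⟨⟨w, b⟩, hX, hbx⟩ :=
    denseRange_ratCast_pi_prod.exists_mem_open hopen
      (exists_dotProduct_lt_lt_of_notMem hconv hcomp.isClosed hx)
  exact ⟨w, b, fun y hy => (hX y hy).le, hbx⟩

/-- Every compact convex subset of `ℝⁿ` is the intersection of a (possibly
infinite) family of rational halfspaces. -/
theorem stmt6 {n : ℕ} (X : Set (Fin n → ℝ))
    (hXcompact : IsCompact X) (hXconvex : Convex ℝ X) :
    ∃ H : Set ((Fin n → ℚ) × ℚ),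
      X = {x : Fin n → ℝ | ∀ wb ∈ H, ∑ i, (wb.1 i : ℝ) * x i ≤ (wb.2 : ℝ)} := by
  refine ⟨{wb | ∀ y ∈ X, ∑ i, (wb.1 i : ℝ) * y i ≤ wb.2}, Set.Subset.antisymm
    (fun x hx wb hwb => hwb x hx) fun x hx => ?_⟩
  by_contra hxX
  obtain ⟨w, b, hXb, hbx⟩ := exists_rat_dotProduct_le_lt_of_notMem hXcompact hXconvex hxX
  exact (hx (w, b) hXb).not_gt hbx
end

section
/- Let n be a positive integer, let I be an arbitrary index set, and let f₀ and (f_i)_{i∈I} be homogeneous real polynomials in n variables. If f₀(x) > 0 for every x ∈ ℝⁿ \ {0} with x_j ≥ 0 for all j and f_i(x) ≥ 0 for all i ∈ I, then there exists a finite subset J ⊆ I such that f₀(x) > 0 for every x ∈ ℝⁿ \ {0} with x_j ≥ 0 for all j and f_i(x) ≥ 0 for all i ∈ J. -/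
/-!
Both the hypothesis and the conclusion are invariant under positive scaling of `x`, since all the
polynomials involved are homogeneous, so it suffices to look at the standard simplex. There the
constraints cut out closed sets whose intersection misses the compact set `{f₀ ≤ 0}`, and
compactness leaves a finite subfamily that already misses it.
-/

namespace MvPolynomial

theorem IsHomogeneous.eval_smul {σ R : Type*} [CommSemiring R] {p : MvPolynomial σ R} {d : ℕ}
    (hp : p.IsHomogeneous d) (c : R) (x : σ → R) :
    eval (c • x) p = c ^ d * eval x p := by
  rw [eval_eq, eval_eq, Finset.mul_sum]
  refine Finset.sum_congr rfl fun m hm => ?_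
  have hdeg : ∑ i ∈ m.support, m i = d := by
    simpa [Finsupp.weight_apply, Finsupp.sum] using hp (mem_support_iff.1 hm)
  simp only [Pi.smul_apply, smul_eq_mul, mul_pow, Finset.prod_mul_distrib,
    Finset.prod_pow_eq_pow_sum, hdeg]
  ring

variable {σ R : Type*} [CommRing R] [LinearOrder R] [IsStrictOrderedRing R]
  {p : MvPolynomial σ R} {d : ℕ} {c : R}

theorem IsHomogeneous.eval_smul_nonneg_iff (hp : p.IsHomogeneous d) (hc : 0 < c) (x : σ → R) :
    0 ≤ eval (c • x) p ↔ 0 ≤ eval x p := by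
  rw [hp.eval_smul, mul_nonneg_iff_of_pos_left (pow_pos hc d)]

theorem IsHomogeneous.eval_smul_pos_iff (hp : p.IsHomogeneous d) (hc : 0 < c) (x : σ → R) :
    0 < eval (c • x) p ↔ 0 < eval x p := by
  rw [hp.eval_smul, mul_pos_iff_of_pos_left (pow_pos hc d)]

end MvPolynomial

theorem exists_pos_smul_eq_of_nonneg_of_ne_zero {ι : Type*} [Fintype ι] {x : ι → ℝ}
    (hx0 : x ≠ 0) (hx : ∀ j, 0 ≤ x j) :
    ∃ t : ℝ, 0 < t ∧ ∃ y ∈ stdSimplex ℝ ι, t • y = x := by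
  obtain ⟨j, hj⟩ : ∃ j, x j ≠ 0 := Function.ne_iff.1 hx0
  have ht : 0 < ∑ j, x j :=
    Finset.sum_pos' (fun j _ => hx j) ⟨j, Finset.mem_univ j, (hx j).lt_of_ne' hj⟩
  refine ⟨∑ j, x j, ht, (∑ j, x j)⁻¹ • x, ⟨fun j => ?_, ?_⟩, smul_inv_smul₀ ht.ne' x⟩
  · exact mul_nonneg (inv_nonneg.2 ht.le) (hx j)
  · simp only [Pi.smul_apply, smul_eq_mul, ← Finset.mul_sum, inv_mul_cancel₀ ht.ne']

theorem IsCompact.exists_finset_forall_pos {X ι : Type*} [TopologicalSpace X] {K : Set X}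
    (hK : IsCompact K) {g : X → ℝ} {c : ι → X → ℝ} (hg : Continuous g)
    (hc : ∀ i, Continuous (c i)) (h : ∀ x ∈ K, (∀ i, 0 ≤ c i x) → 0 < g x) :
    ∃ J : Finset ι, ∀ x ∈ K, (∀ i ∈ J, 0 ≤ c i x) → 0 < g x := by
  have hempty : (K ∩ {x | g x ≤ 0}) ∩ ⋂ i, {x | 0 ≤ c i x} = ∅ := by
    refine Set.eq_empty_iff_forall_notMem.2 fun x ⟨⟨hxK, hgx⟩, hx⟩ => ?_
    exact (h x hxK (Set.mem_iInter.1 hx)).not_ge hgx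
  obtain ⟨J, hJ⟩ := (hK.inter_right (isClosed_le hg continuous_const)).elim_finite_subfamily_closed
    _ (fun i => isClosed_le continuous_const (hc i)) hempty
  refine ⟨J, fun x hxK hxJ => not_le.1 fun hgx => ?_⟩
  have hx : x ∈ (K ∩ {x | g x ≤ 0}) ∩ ⋂ i ∈ J, {x | 0 ≤ c i x} :=
    ⟨⟨hxK, hgx⟩, Set.mem_iInter₂.2 hxJ⟩
  rwa [hJ] at hx

theorem stmt9_general {n : ℕ} {I : Type*}
    (f0 : MvPolynomial (Fin n) ℝ) (f : I → MvPolynomial (Fin n) ℝ)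
    (h0 : ∃ d : ℕ, f0.IsHomogeneous d)
    (hf : ∀ i, ∃ d : ℕ, (f i).IsHomogeneous d)
    (hpos : ∀ x : Fin n → ℝ, x ≠ 0 → (∀ j, 0 ≤ x j) →
      (∀ i, 0 ≤ MvPolynomial.eval x (f i)) → 0 < MvPolynomial.eval x f0) :
    ∃ J : Finset I, ∀ x : Fin n → ℝ, x ≠ 0 → (∀ j, 0 ≤ x j) →
      (∀ i ∈ J, 0 ≤ MvPolynomial.eval x (f i)) → 0 < MvPolynomial.eval x f0 := by
  obtain ⟨d0, h0⟩ := h0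
  choose d hf using hf
  have hsimplex : ∀ y ∈ stdSimplex ℝ (Fin n),
      (∀ i, 0 ≤ MvPolynomial.eval y (f i)) → 0 < MvPolynomial.eval y f0 := by
    rintro y ⟨hy, hsum⟩
    refine hpos y ?_ hy
    rintro rfl
    simp at hsum
  obtain ⟨J, hJ⟩ := (isCompact_stdSimplex ℝ (Fin n)).exists_finset_forall_pos
    (MvPolynomial.continuous_eval f0) (fun i => MvPolynomial.continuous_eval (f i)) hsimplex
  refine ⟨J, fun x hx0 hx hxJ => ?_⟩
  obtain ⟨t, ht, y, hy, rfl⟩ := exists_pos_smul_eq_of_nonneg_of_ne_zero hx0 hx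
  rw [h0.eval_smul_pos_iff ht]
  exact hJ y hy fun i hi => ((hf i).eval_smul_nonneg_iff ht y).1 (hxJ i hi)

/-- If a homogeneous polynomial is positive on the intersection of the
nonnegative orthant (minus the origin) with infinitely many homogeneous
polynomial inequality constraints, then it is already positive on the
intersection with some finite subfamily of those constraints. -/
theorem stmt9 {n : ℕ} (hn : 0 < n) {I : Type*}
    (f0 : MvPolynomial (Fin n) ℝ) (f : I → MvPolynomial (Fin n) ℝ)
    (h0 : ∃ d : ℕ, f0.IsHomogeneous d)
    (hf : ∀ i, ∃ d : ℕ, (f i).IsHomogeneous d)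
    (hpos : ∀ x : Fin n → ℝ, x ≠ 0 → (∀ j, 0 ≤ x j) →
      (∀ i, 0 ≤ MvPolynomial.eval x (f i)) → 0 < MvPolynomial.eval x f0) :
    ∃ J : Finset I, ∀ x : Fin n → ℝ, x ≠ 0 → (∀ j, 0 ≤ x j) →
      (∀ i ∈ J, 0 ≤ MvPolynomial.eval x (f i)) → 0 < MvPolynomial.eval x f0 :=
  stmt9_general f0 f h0 hf hpos
end

section
/- Let f : ℝ² → ℝ be defined by f(x) = exp(1.5·x₁) − exp(x₂) − exp(−x₂), and let X = { x ∈ ℝ² : x₁ = 1 and −1 ≤ x₂ ≤ 1 }. Then there do NOT exist vectors c^{(1)}, c^{(2)}, c^{(3)} ∈ ℝ³ with c^{(1)} + c^{(2)} + c^{(3)} = (1, −1, −1) such that for each i ∈ {1,2,3}: c^{(i)}_j ≥ 0 for all j ≠ i, and c^{(i)}₁·exp(1.5·x₁) + c^{(i)}₂·exp(x₂) + c^{(i)}₃·exp(−x₂) ≥ 0 for all x ∈ X. In other words, f is not an X-SAGE function with respect to its own exponent set {(1.5,0), (0,1), (0,−1)}. -/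
/-!
Evaluate the `i`-th signomial at `x = (1, t)` with `t = 0, 1, -1` respectively: there the term
carrying its one possibly negative coefficient is largest relative to the other two. Adding the
three inequalities and eliminating the diagonal coefficients with the sum constraint leaves
`exp a - 2e - (c₀₁ + c₀₂)(e - 1) - (c₁₂ + c₂₁)(e - e⁻¹) ≥ 0`, which is impossible once
`exp a < 2e`, i.e. `a < 1 + log 2`; this covers `a = 1.5`.
-/

open Real

lemma exp_lt_two_mul_exp_one {a : ℝ} (ha : a < 1 + log 2) : exp a < 2 * exp 1 := by
  calc exp a < exp (1 + log 2) := exp_lt_exp.2 ha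
    _ = 2 * exp 1 := by rw [exp_add, exp_log two_pos, mul_comm]

lemma signomial_nonneg_at {a t : ℝ} {c : Fin 3 → ℝ}
    (hc : ∀ x : Fin 2 → ℝ, x 0 = 1 → -1 ≤ x 1 → x 1 ≤ 1 →
      0 ≤ c 0 * exp (a * x 0) + c 1 * exp (x 1) + c 2 * exp (-x 1))
    (ht₀ : -1 ≤ t) (ht₁ : t ≤ 1) :
    0 ≤ c 0 * exp a + c 1 * exp t + c 2 * exp (-t) := by
  simpa using hc ![1, t] rfl ht₀ ht₁

theorem not_sage_exp_sub_exp_sub_exp {a : ℝ} (ha : a < 1 + log 2) :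
    ¬ ∃ cs : Fin 3 → Fin 3 → ℝ,
      (∀ j, cs 0 j + cs 1 j + cs 2 j = (![1, -1, -1] : Fin 3 → ℝ) j) ∧
      ∀ i : Fin 3, (∀ j, j ≠ i → 0 ≤ cs i j) ∧
        ∀ x : Fin 2 → ℝ, x 0 = 1 → -1 ≤ x 1 → x 1 ≤ 1 →
          0 ≤ cs i 0 * exp (a * x 0) + cs i 1 * exp (x 1) + cs i 2 * exp (-x 1) := by
  rintro ⟨cs, hsum, h⟩
  have hs0 : cs 0 0 + cs 1 0 + cs 2 0 = 1 := hsum 0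
  have hs1 : cs 0 1 + cs 1 1 + cs 2 1 = -1 := hsum 1
  have hs2 : cs 0 2 + cs 1 2 + cs 2 2 = -1 := hsum 2
  have hA := signomial_nonneg_at (t := 0) (h 0).2 (by norm_num) (by norm_num)
  have hB := signomial_nonneg_at (t := 1) (h 1).2 (by norm_num) (by norm_num)
  have hC := signomial_nonneg_at (t := -1) (h 2).2 (by norm_num) (by norm_num)
  simp only [neg_zero, exp_zero, mul_one, neg_neg] at hA hB hC
  have hsum_eval :
      (cs 0 0 * exp a + cs 0 1 + cs 0 2) + (cs 1 0 * exp a + cs 1 1 * exp 1 + cs 1 2 * exp (-1))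
        + (cs 2 0 * exp a + cs 2 1 * exp (-1) + cs 2 2 * exp 1)
      = exp a - 2 * exp 1 - (cs 0 1 + cs 0 2) * (exp 1 - 1)
        - (cs 1 2 + cs 2 1) * (exp 1 - exp (-1)) := by
    linear_combination exp a * hs0 + exp 1 * hs1 + exp 1 * hs2
  have hcs₀ : 0 ≤ cs 0 1 + cs 0 2 := add_nonneg ((h 0).1 1 (by decide)) ((h 0).1 2 (by decide))
  have hcs₁₂ : 0 ≤ cs 1 2 + cs 2 1 := add_nonneg ((h 1).1 2 (by decide)) ((h 2).1 1 (by decide))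
  have he₁ : 0 ≤ exp 1 - 1 := by linarith [add_one_le_exp (1 : ℝ)]
  have he₂ : 0 ≤ exp 1 - exp (-1) := sub_nonneg.2 (exp_le_exp.2 (by norm_num))
  linarith [mul_nonneg hcs₀ he₁, mul_nonneg hcs₁₂ he₂, exp_lt_two_mul_exp_one ha]

/-- The signomial `f(x) = exp(1.5 x₁) − exp(x₂) − exp(−x₂)`, positive on
`X = {x : x₁ = 1, −1 ≤ x₂ ≤ 1}`, is nevertheless not `X`-SAGE with respect to
its own exponent set: its coefficient vector `(1, −1, −1)` admits no
decomposition into three vectors, the `i`-th nonnegative off coordinate `i`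
and defining a signomial nonnegative on `X`. -/
theorem stmt11 :
    ¬ ∃ cs : Fin 3 → Fin 3 → ℝ,
      (∀ j, cs 0 j + cs 1 j + cs 2 j = (![1, -1, -1] : Fin 3 → ℝ) j) ∧
      ∀ i : Fin 3, (∀ j, j ≠ i → 0 ≤ cs i j) ∧
        ∀ x : Fin 2 → ℝ, x 0 = 1 → -1 ≤ x 1 → x 1 ≤ 1 →
          0 ≤ cs i 0 * Real.exp (1.5 * x 0) + cs i 1 * Real.exp (x 1)
              + cs i 2 * Real.exp (-x 1) :=
  not_sage_exp_sub_exp_sub_exp (by linarith [log_two_gt_d9])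
end

section
/- Let n be a positive integer, let y ∈ ℝⁿ satisfy y_i > 0 for all i, let b ∈ ℚⁿ, let d ∈ ℚ, and let m be a positive integer such that m·b_i ∈ ℤ for every i. Then ∑_{i=1}^n b_i · log(y_i) ≤ d if and only if exp(m·d) · ∏_{i : b_i < 0} y_i^{−m·b_i} − ∏_{i : b_i > 0} y_i^{m·b_i} ≥ 0, where the exponents −m·b_i and m·b_i are the corresponding positive integers and rational numbers are coerced into reals. -/
open scoped BigOperators

open Finset Real

theorem Finset.prod_rpow_eq_exp_sum_mul_log {ι : Type*} {s : Finset ι} {y : ι → ℝ}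
    (hy : ∀ i ∈ s, 0 < y i) (e : ι → ℝ) :
    ∏ i ∈ s, y i ^ e i = exp (∑ i ∈ s, e i * log (y i)) := by
  rw [exp_sum]
  exact prod_congr rfl fun i hi => by rw [rpow_def_of_pos (hy i hi), mul_comm]

theorem Finset.sum_filter_pos_add_sum_filter_neg {ι M α : Type*} [AddCommMonoid M]
    [Zero α] [LinearOrder α] (s : Finset ι) (g : ι → α) (f : ι → M)
    (hf : ∀ i ∈ s, g i = 0 → f i = 0) :
    ∑ i ∈ s with 0 < g i, f i + ∑ i ∈ s with g i < 0, f i = ∑ i ∈ s, f i := by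
  rw [sum_filter, sum_filter, ← sum_add_distrib]
  refine sum_congr rfl fun i hi => ?_
  rcases lt_trichotomy (g i) 0 with h | h | h
  · simp [h, h.not_gt]
  · simp [h, hf i hi h]
  · simp [h, h.not_gt]

theorem stmt13_general {n : ℕ} (y : Fin n → ℝ) (hy : ∀ i, 0 < y i)
    (b : Fin n → ℚ) (d : ℚ) (m : ℕ) (hm : 0 < m) :
    (∑ i, (b i : ℝ) * Real.log (y i) ≤ (d : ℝ)) ↔
      0 ≤ Real.exp ((m : ℝ) * (d : ℝ)) *
            (∏ i ∈ Finset.univ.filter fun i => b i < 0,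
              y i ^ (-((m : ℝ) * (b i : ℝ))))
          - ∏ i ∈ Finset.univ.filter fun i => 0 < b i,
              y i ^ ((m : ℝ) * (b i : ℝ)) := by
  have hsplit := sum_filter_pos_add_sum_filter_neg univ b
    (fun i => (m : ℝ) * b i * log (y i)) fun i _ hi => by simp [hi]
  rw [prod_rpow_eq_exp_sum_mul_log fun i _ => hy i, prod_rpow_eq_exp_sum_mul_log fun i _ => hy i,
    sub_nonneg, ← exp_add, exp_le_exp, ← mul_le_mul_iff_of_pos_left (Nat.cast_pos.2 hm : (0 : ℝ) < m),
    mul_sum]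
  simp only [neg_mul, sum_neg_distrib, mul_assoc] at hsplit ⊢
  constructor <;> intro h <;> linarith

/-- A rational halfspace constraint `b ⬝ log y ≤ d` on the componentwise
logarithm of a positive vector `y` is equivalent to a monomial-difference
inequality in `y`, obtained by exponentiating and clearing denominators with
a common multiplier `m` (so that every `m * bᵢ` is an integer). -/
theorem stmt13 {n : ℕ} (hn : 0 < n) (y : Fin n → ℝ) (hy : ∀ i, 0 < y i)
    (b : Fin n → ℚ) (d : ℚ) (m : ℕ) (hm : 0 < m)
    (hmb : ∀ i, ∃ z : ℤ, (m : ℚ) * b i = (z : ℚ)) :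
    (∑ i, (b i : ℝ) * Real.log (y i) ≤ (d : ℝ)) ↔
      0 ≤ Real.exp ((m : ℝ) * (d : ℝ)) *
            (∏ i ∈ Finset.univ.filter fun i => b i < 0,
              y i ^ (-((m : ℝ) * (b i : ℝ))))
          - ∏ i ∈ Finset.univ.filter fun i => 0 < b i,
              y i ^ ((m : ℝ) * (b i : ℝ)) :=
  stmt13_general y hy b d m hm
end

section
/- (Dickinson–Povh Positivstellensatz) Let f₀, f₁, …, f_m be homogeneous real polynomials in n variables. If f₀(x) > 0 for every x ∈ ℝⁿ \ {0} with x_i ≥ 0 for all i and f_j(x) ≥ 0 for all j ∈ {1,…,m}, then there exist p ∈ ℕ and homogeneous polynomials g₀, g₁, …, g_m in n variables, each having only nonnegative coefficients, such that (x₁ + ⋯ + x_n)^p · f₀ = g₀ + ∑_{j=1}^m f_j · g_j as polynomials. -/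
/-
Write `σ = x₁ + ⋯ + xₙ` and `Δ` for the standard simplex. By Pólya's theorem a homogeneous `f`
of degree `d` that is positive on `Δ` has `σ ^ N * f` with nonnegative coefficients for all large
`N`: up to positive factors, the coefficient of `x ^ α` in `σ ^ N * f` is `f` evaluated at
`α / (N + d)` with every power `t ^ v` replaced by `t (t - ε) ⋯ (t - (v - 1) ε)`, `ε = 1 / (N + d)`,
and this perturbation of `f` stays positive on the compact set `Δ` for `ε` small.

It is therefore enough to find homogeneous `qⱼ` positive on `Δ` such that `σ ^ p f₀ - ∑ fⱼ qⱼ` is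
homogeneous and positive on `Δ`; then multiply everything by a large power of `σ`. We take
`qⱼ = a σ ^ rⱼ (B σ ^ dⱼ - fⱼ) ^ (k + 1)` with `B > fⱼ` on `Δ`. On `Δ`, by Bernoulli's inequality,
`fⱼ qⱼ ≤ μ B² / (k + 1) - μ min(fⱼ, 0)²` when `(k + 1) B ^ k a = μ`, and by compactness
`f₀ + μ ∑ min(fⱼ, 0)²` is bounded below on `Δ` by some `c > 0` once `μ` is large, since it is
positive wherever all `fⱼ ≥ 0`. Choosing `k` with `m μ B² / (k + 1) < c` finishes the argument.
-/

open MvPolynomial Finset Filter Topology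
open scoped Nat

theorem IsCompact.exists_pos_forall_le_add_mul {X : Type*} [TopologicalSpace X] {K : Set X}
    (hK : IsCompact K) {f g : X → ℝ} (hf : Continuous f) (hg : Continuous g) (hg0 : ∀ x, 0 ≤ g x)
    (h : ∀ x ∈ K, g x = 0 → 0 < f x) :
    ∃ μ > 0, ∃ c > 0, ∀ x ∈ K, c ≤ f x + μ * g x := by
  set U : ℕ → Set X := fun k => {x | 0 < f x + (k + 1) * g x}
  have hmono : Monotone U := by
    intro k l hkl x (hx : 0 < f x + (k + 1) * g x)
    have : (k : ℝ) ≤ l := by exact_mod_cast hkl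
    show 0 < f x + (l + 1) * g x
    nlinarith [hg0 x]
  have hcover : K ⊆ ⋃ k, U k := by
    intro x hx
    rcases (hg0 x).eq_or_lt with hx0 | hx0
    · exact Set.mem_iUnion.2 ⟨0, by simp [U, ← hx0, h x hx hx0.symm]⟩
    · obtain ⟨k, hk⟩ := exists_nat_gt (-f x / g x)
      have := (div_lt_iff₀ hx0).1 hk
      exact Set.mem_iUnion.2 ⟨k, show 0 < f x + (k + 1) * g x by nlinarith⟩
  obtain ⟨k, hk⟩ := hK.elim_directed_cover U (fun k => isOpen_lt continuous_const (by fun_prop))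
    hcover hmono.directed_le
  obtain ⟨c, hc, hcK⟩ := hK.exists_forall_le' (by fun_prop : Continuous fun x =>
    f x + (k + 1) * g x).continuousOn hk
  exact ⟨k + 1, by positivity, c, hc, hcK⟩

theorem mul_sub_pow_add_min_sq_le {B u : ℝ} (hB : 0 < B) (hu : u ≤ B) (k : ℕ) :
    u * (B - u) ^ (k + 1) + (k + 1) * B ^ k * min u 0 ^ 2 ≤ B ^ (k + 2) := by
  rcases le_or_gt 0 u with hu0 | hu0
  · rw [min_eq_right hu0]
    have : (B - u) ^ (k + 1) ≤ B ^ (k + 1) := pow_le_pow_left₀ (by linarith) (by linarith) _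
    calc u * (B - u) ^ (k + 1) + (k + 1) * B ^ k * 0 ^ 2 ≤ B * B ^ (k + 1) := by
          rw [zero_pow two_ne_zero, mul_zero, add_zero]
          gcongr
      _ = B ^ (k + 2) := by ring
  · rw [min_eq_left hu0.le]
    have hbern := pow_add_mul_le_add_pow hB.le (b := -u) (by linarith) (k + 1)
    push_cast at hbern
    rw [← sub_eq_add_neg] at hbern
    have hlt : u * B ^ (k + 1) < 0 := mul_neg_of_neg_of_pos hu0 (pow_pos hB _)
    nlinarith [mul_le_mul_of_nonpos_left hbern hu0.le, pow_pos hB (k + 2)]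

theorem IsCompact.exists_forall_pos_sub_sum_mul_sub_pow {X κ : Type*} [TopologicalSpace X]
    [Fintype κ] {K : Set X} (hK : IsCompact K) {f : X → ℝ} {g : κ → X → ℝ} (hf : Continuous f)
    (hg : ∀ j, Continuous (g j)) (h : ∀ x ∈ K, (∀ j, 0 ≤ g j x) → 0 < f x) :
    ∃ B, ∃ a > 0, ∃ k : ℕ, (∀ j, ∀ x ∈ K, g j x < B) ∧
      ∀ x ∈ K, 0 < f x - ∑ j, a * g j x * (B - g j x) ^ (k + 1) := by
  obtain ⟨μ, hμ, c, hc, hfg⟩ :=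
    hK.exists_pos_forall_le_add_mul (g := fun x => ∑ j, min (g j x) 0 ^ 2) hf (by fun_prop)
      (fun x => sum_nonneg fun j _ => sq_nonneg _) fun x hx hx0 => h x hx fun j => by
        simpa using (sum_eq_zero_iff_of_nonneg fun j _ => sq_nonneg _).1 hx0 j (mem_univ j)
  obtain ⟨M, hM⟩ := hK.exists_bound_of_continuousOn (continuous_pi hg).continuousOn
  set B := max M 0 + 1
  have hB : 0 < B := by positivity
  have hgB (j : κ) (x : X) (hx : x ∈ K) : g j x < B :=
    calc g j x ≤ ‖fun j => g j x‖ := (le_abs_self _).trans (norm_le_pi_norm (fun j => g j x) j)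
      _ ≤ M := hM x hx
      _ < B := by simp only [B]; linarith [le_max_left M 0]
  obtain ⟨k, hk⟩ := exists_nat_gt (Fintype.card κ * μ * B ^ 2 / c)
  set a := μ / ((k + 1) * B ^ k)
  refine ⟨B, a, by positivity, k, hgB, fun x hx => ?_⟩
  have hterm (j : κ) :
      a * g j x * (B - g j x) ^ (k + 1) ≤ μ * B ^ 2 / (k + 1) - μ * min (g j x) 0 ^ 2 := by
    have := mul_sub_pow_add_min_sq_le hB (hgB j x hx).le k
    simp only [a]
    field_simp
    linarith [pow_add B k 2]
  have hsum := sum_le_sum fun j (_ : j ∈ univ) => hterm j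
  rw [sum_sub_distrib, sum_const, Finset.card_univ, ← mul_sum, nsmul_eq_mul] at hsum
  have hsmall : Fintype.card κ * (μ * B ^ 2 / (k + 1)) < c := by
    rw [div_lt_iff₀ hc] at hk
    rw [mul_div_assoc', div_lt_iff₀ (by positivity)]
    nlinarith
  linarith [hfg x hx]

theorem Finsupp.multinomial_tsub_mul_prod_factorial {ι : Type*} [Fintype ι] {v α : ι →₀ ℕ}
    (hv : v ≤ α) :
    (α - v).multinomial * ∏ i, (α i)! = ((α - v).degree)! * ∏ i, (α i).descFactorial (v i) := by
  have hfac (i : ι) : (α i)! = ((α - v) i)! * (α i).descFactorial (v i) :=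
    (Nat.factorial_mul_descFactorial (hv i)).symm
  rw [Finset.prod_congr rfl fun i _ => hfac i, Finset.prod_mul_distrib, ← mul_assoc,
    multinomial_eq_of_support_subset (Finset.subset_univ _), mul_comm (Nat.multinomial _ _),
    Nat.multinomial_spec, degree_eq_sum]

namespace MvPolynomial

variable {ι R : Type*} [Fintype ι]

theorem isHomogeneous_sum_X_pow [CommSemiring R] (N : ℕ) :
    ((∑ i, X i : MvPolynomial ι R) ^ N).IsHomogeneous N := by
  simpa using ((IsHomogeneous.sum _ _ 1 fun i _ => isHomogeneous_X R i).pow N)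

theorem eval_sum_X_of_mem_stdSimplex {x : ι → ℝ} (hx : x ∈ stdSimplex ℝ ι) :
    eval x (∑ i, X i) = 1 := by
  simpa using hx.2

theorem coeff_sum_X_pow_mul_mul_prod_factorial [CommSemiring R] {f : MvPolynomial ι R} {d N : ℕ}
    (hf : f.IsHomogeneous d) {α : ι →₀ ℕ} (hα : α.degree = N + d) :
    coeff α ((∑ i, X i) ^ N * f) * ∏ i, ((α i)! : R) =
      N ! * ∑ v ∈ f.support, coeff v f * ∏ i, ((α i).descFactorial (v i) : R) := by
  conv_lhs => rw [f.as_sum, mul_sum, coeff_sum, sum_mul]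
  rw [mul_sum]
  refine sum_congr rfl fun v hv => ?_
  rw [coeff_mul_monomial']
  split_ifs with hle
  · have hdeg : (α - v).degree = N := by
      have hv : v.degree = d := by
        rw [Finsupp.degree_eq_weight_one]; exact hf (mem_support_iff.mp hv)
      have := map_add Finsupp.degree (α - v) v
      rw [tsub_add_cancel_of_le hle] at this
      omega
    have key := congrArg (Nat.cast : ℕ → R) (Finsupp.multinomial_tsub_mul_prod_factorial hle)
    push_cast [hdeg] at key
    rw [coeff_sum_X_pow_of_fintype, if_pos (show (α - v).sum (fun _ m => m) = N from hdeg),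
      mul_right_comm, key]
    ring
  · obtain ⟨i, hi⟩ : ∃ i, α i < v i := by simpa [Finsupp.le_def] using hle
    have : ∏ i, ((α i).descFactorial (v i) : R) = 0 :=
      prod_eq_zero (mem_univ i) (by rw [Nat.descFactorial_eq_zero_iff_lt.mpr hi, Nat.cast_zero])
    simp [this]

noncomputable def fallingEval (ε : ℝ) (t : ι → ℝ) (f : MvPolynomial ι ℝ) : ℝ :=
  ∑ v ∈ f.support, coeff v f * ∏ i, ∏ k ∈ range (v i), (t i - k * ε)

theorem fallingEval_zero (t : ι → ℝ) (f : MvPolynomial ι ℝ) : fallingEval 0 t f = eval t f := by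
  simp [fallingEval, eval_eq']

theorem continuous_fallingEval (f : MvPolynomial ι ℝ) :
    Continuous fun p : ℝ × (ι → ℝ) => fallingEval p.1 p.2 f := by
  unfold fallingEval
  fun_prop

theorem fallingEval_one_natCast (f : MvPolynomial ι ℝ) (α : ι →₀ ℕ) :
    fallingEval 1 (fun i => (α i : ℝ)) f =
      ∑ v ∈ f.support, coeff v f * ∏ i, ((α i).descFactorial (v i) : ℝ) := by
  simp [fallingEval, ← descPochhammer_eval_eq_descFactorial, descPochhammer_eval_eq_prod_range]

theorem IsHomogeneous.fallingEval_mul_smul {f : MvPolynomial ι ℝ} {d : ℕ} (hf : f.IsHomogeneous d)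
    (s ε : ℝ) (t : ι → ℝ) : fallingEval (s * ε) (s • t) f = s ^ d * fallingEval ε t f := by
  rw [fallingEval, fallingEval, mul_sum]
  refine sum_congr rfl fun v hv => ?_
  have hv : ∑ i, v i = d := by
    rw [← Finsupp.degree_eq_sum, Finsupp.degree_eq_weight_one]; exact hf (mem_support_iff.mp hv)
  have (i : ι) : ∏ k ∈ range (v i), ((s • t) i - k * (s * ε)) =
      s ^ v i * ∏ k ∈ range (v i), (t i - k * ε) := by
    rw [show s ^ v i = ∏ _k ∈ range (v i), s by simp, ← prod_mul_distrib]
    exact prod_congr rfl fun k _ => by simp only [Pi.smul_apply, smul_eq_mul]; ring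
  simp_rw [this, prod_mul_distrib, prod_pow_eq_pow_sum, hv]
  ring

theorem eventually_nonneg_coeff_sum_X_pow_mul {f : MvPolynomial ι ℝ} {d : ℕ}
    (hf : f.IsHomogeneous d) (hpos : ∀ x ∈ stdSimplex ℝ ι, 0 < eval x f) :
    ∀ᶠ N in atTop, ∀ α, 0 ≤ coeff α ((∑ i, X i) ^ N * f) := by
  have hnear : ∀ᶠ ε in 𝓝 0, ∀ t ∈ stdSimplex ℝ ι, 0 < fallingEval ε t f :=
    (isCompact_stdSimplex ℝ ι).eventually_forall_of_forall_eventually fun t ht =>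
      (continuous_fallingEval f).continuousAt.eventually
        (lt_mem_nhds (by simpa [fallingEval_zero] using hpos t ht))
  have hlim : Tendsto (fun N : ℕ => ((N : ℝ) + d)⁻¹) atTop (𝓝 0) :=
    tendsto_inv_atTop_zero.comp (tendsto_atTop_add_const_right _ _ tendsto_natCast_atTop_atTop)
  filter_upwards [hlim.eventually hnear, eventually_ge_atTop 1] with N hN hN1 α
  by_cases hα : α.degree = N + d
  · set T : ℝ := N + d
    have hT : 0 < T := by positivity
    have ht : T⁻¹ • (fun i => (α i : ℝ)) ∈ stdSimplex ℝ ι := by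
      refine ⟨fun i => by simp only [Pi.smul_apply, smul_eq_mul]; positivity, ?_⟩
      have hsum : ∑ i, (α i : ℝ) = T := by
        rw [← Nat.cast_sum, ← Finsupp.degree_eq_sum, hα]; push_cast; rfl
      simp [← mul_sum, hsum, hT.ne']
    have key := coeff_sum_X_pow_mul_mul_prod_factorial (R := ℝ) hf hα
    rw [← fallingEval_one_natCast, ← mul_inv_cancel₀ hT.ne',
      ← smul_inv_smul₀ hT.ne' (fun i => (α i : ℝ)), hf.fallingEval_mul_smul] at key
    refine nonneg_of_mul_nonneg_left (b := ∏ i, ((α i)! : ℝ)) ?_ (by positivity)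
    have := hN _ ht
    rw [key]
    positivity
  · exact (((isHomogeneous_sum_X_pow N).mul hf).coeff_eq_zero hα).symm.le

variable {κ : Type*} [Fintype κ]

theorem exists_sum_X_pow_mul_sub_sum_mul_pos {f₀ : MvPolynomial ι ℝ} {f : κ → MvPolynomial ι ℝ}
    {d₀ : ℕ} {d : κ → ℕ} (h₀ : f₀.IsHomogeneous d₀) (hf : ∀ j, (f j).IsHomogeneous (d j))
    (hpos : ∀ x ∈ stdSimplex ℝ ι, (∀ j, 0 ≤ eval x (f j)) → 0 < eval x f₀) :
    ∃ (p D : ℕ) (q : κ → MvPolynomial ι ℝ),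
      ((∑ i, X i) ^ p * f₀ - ∑ j, f j * q j).IsHomogeneous D ∧
      (∀ x ∈ stdSimplex ℝ ι, 0 < eval x ((∑ i, X i) ^ p * f₀ - ∑ j, f j * q j)) ∧
      (∀ j, (q j).IsHomogeneous (D - d j)) ∧ ∀ j, ∀ x ∈ stdSimplex ℝ ι, 0 < eval x (q j) := by
  obtain ⟨B, a, ha, k, hfB, hpos'⟩ :=
    (isCompact_stdSimplex ℝ ι).exists_forall_pos_sub_sum_mul_sub_pow (continuous_eval f₀)
      (fun j => continuous_eval (f j)) hpos
  set p := ∑ j, d j * (k + 2)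
  have hle (j : κ) : d j * (k + 2) ≤ p + d₀ :=
    (single_le_sum (f := fun j => d j * (k + 2)) (fun j _ => Nat.zero_le _) (mem_univ j)).trans
      (Nat.le_add_right _ _)
  set q : κ → MvPolynomial ι ℝ := fun j =>
    C a * (∑ i, X i) ^ (p + d₀ - d j * (k + 2)) * (C B * (∑ i, X i) ^ d j - f j) ^ (k + 1)
  have hq (j : κ) : (q j).IsHomogeneous (p + d₀ - d j) := by
    convert ((isHomogeneous_C _ a).mul (isHomogeneous_sum_X_pow (p + d₀ - d j * (k + 2)))).mul
      ((((isHomogeneous_sum_X_pow _).C_mul B).sub (hf j)).pow (k + 1)) using 1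
    have := hle j
    rw [show d j * (k + 2) = d j * (k + 1) + d j by ring] at this ⊢
    omega
  have heval_q (j : κ) (x : ι → ℝ) (hx : x ∈ stdSimplex ℝ ι) :
      eval x (q j) = a * (B - eval x (f j)) ^ (k + 1) := by
    simp [q, eval_sum_X_of_mem_stdSimplex hx]
  refine ⟨p, p + d₀, q, ?_, fun x hx => ?_, hq, fun j x hx => ?_⟩
  · refine ((isHomogeneous_sum_X_pow p).mul h₀).sub (IsHomogeneous.sum _ _ _ fun j _ => ?_)
    have := (Nat.le_mul_of_pos_right (d j) (by omega : 0 < k + 2)).trans (hle j)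
    exact (by omega : d j + (p + d₀ - d j) = p + d₀) ▸ (hf j).mul (hq j)
  · convert hpos' x hx using 2
    simp [heval_q _ x hx, eval_sum_X_of_mem_stdSimplex hx, mul_assoc, mul_left_comm]
  · rw [heval_q j x hx]
    have := sub_pos.2 (hfB j x hx)
    positivity

end MvPolynomial

/-- (Dickinson–Povh Positivstellensatz.) If homogeneous `f₀` is positive on the
nonnegative orthant minus the origin intersected with the constraints
`fⱼ ≥ 0`, then `(x₁ + ⋯ + xₙ)^p · f₀ = g₀ + ∑ⱼ fⱼ · gⱼ` for some `p` and some
homogeneous polynomials `g₀, gⱼ` with nonnegative coefficients. -/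
theorem stmt14 {n m : ℕ} (f0 : MvPolynomial (Fin n) ℝ)
    (f : Fin m → MvPolynomial (Fin n) ℝ)
    (h0 : ∃ d : ℕ, f0.IsHomogeneous d)
    (hf : ∀ j, ∃ d : ℕ, (f j).IsHomogeneous d)
    (hpos : ∀ x : Fin n → ℝ, x ≠ 0 → (∀ i, 0 ≤ x i) →
      (∀ j, 0 ≤ MvPolynomial.eval x (f j)) → 0 < MvPolynomial.eval x f0) :
    ∃ (p : ℕ) (g0 : MvPolynomial (Fin n) ℝ)
      (g : Fin m → MvPolynomial (Fin n) ℝ),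
      (∃ d : ℕ, g0.IsHomogeneous d) ∧
      (∀ j, ∃ d : ℕ, (g j).IsHomogeneous d) ∧
      (∀ mono : Fin n →₀ ℕ, 0 ≤ MvPolynomial.coeff mono g0) ∧
      (∀ j, ∀ mono : Fin n →₀ ℕ, 0 ≤ MvPolynomial.coeff mono (g j)) ∧
      (∑ i, MvPolynomial.X i) ^ p * f0 = g0 + ∑ j, f j * g j := by
  obtain ⟨d₀, h₀⟩ := h0
  choose d hd using hf
  have hpos' (x : Fin n → ℝ) (hx : x ∈ stdSimplex ℝ (Fin n)) (hfx : ∀ j, 0 ≤ eval x (f j)) :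
      0 < eval x f0 :=
    hpos x (fun h => by simpa [h] using hx.2) hx.1 hfx
  obtain ⟨p, D, q, hF, hFpos, hq, hqpos⟩ := exists_sum_X_pow_mul_sub_sum_mul_pos h₀ hd hpos'
  obtain ⟨N, hNF, hNq⟩ := ((eventually_nonneg_coeff_sum_X_pow_mul hF hFpos).and
    (eventually_all.2 fun j => eventually_nonneg_coeff_sum_X_pow_mul (hq j) (hqpos j))).exists
  refine ⟨N + p, (∑ i, X i) ^ N * ((∑ i, X i) ^ p * f0 - ∑ j, f j * q j),
    fun j => (∑ i, X i) ^ N * q j, ⟨_, (isHomogeneous_sum_X_pow N).mul hF⟩,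
    fun j => ⟨_, (isHomogeneous_sum_X_pow N).mul (hq j)⟩, hNF, hNq, ?_⟩
  simp only [mul_sub, mul_sum, mul_left_comm _ (f _), pow_add, mul_assoc, sub_add_cancel]
end
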